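/- Under consistency of the potential outcomes and Assumptions (A5) and (A6), for any versions Δμ_N of E[ΔY ∣ G=N, X] and Δμ_C of E[ΔY ∣ G=C, X], δ := E[(Y₁^{(1,1)} − Y₁^{(1,0)})·1{G=T}]/p_T = E[ (e_T(X)/p_T) · (Δμ_N(X) − Δμ_C(X)) ]. (Representation of δ as the treated-group average of the contrast of conditional outcome trends, used at the start of the proof of Theorem 2.) -/

import Mathlib

open MeasureTheory ProbabilityTheory Filter Topology

/-- Group label: `T` = treated (`g(A)=(1,0)`), `N` = neighboring control (`g(A)=(0,1)`),
`C` = non-neighboring control (`g(A)=(0,0)`). -/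
inductive GLabel : Type
  | T | N | C
  deriving DecidableEq

instance : MeasurableSpace GLabel := ⊤

/-- The σ-algebra `𝔛` generated by the covariates `X`. -/
def sigmaX {Ω : Type} {q : ℕ} (X : Ω → (Fin q → ℝ)) : MeasurableSpace Ω :=
  MeasurableSpace.comap X inferInstance

/-- The indicator `1{G = g}` as a real-valued function. -/
def indG {Ω : Type} (G : Ω → GLabel) (g : GLabel) (ω : Ω) : ℝ :=
  if G ω = g then 1 else 0

/-- `f` is a version of the conditional expectation `E[Z ∣ G = g, X]`:
it is measurable and `E[Z·1{G=g} ∣ 𝔛] = f(X)·e_g(X)` `P`-a.s. -/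
def IsCondVersion {Ω : Type} [MeasurableSpace Ω] (P : Measure Ω) {q : ℕ}
    (X : Ω → (Fin q → ℝ)) (G : Ω → GLabel) (e : GLabel → (Fin q → ℝ) → ℝ)
    (g : GLabel) (Z : Ω → ℝ) (f : (Fin q → ℝ) → ℝ) : Prop :=
  Measurable f ∧
    P[(fun ω => Z ω * indG G g ω) | sigmaX X] =ᵐ[P] (fun ω => f (X ω) * e g (X ω))

/-
By consistency, the conditional trend of the neighbouring controls is the spillover
`E[Y₁^{(0,1)} - Y₁^{(0,0)} ∣ G=N, X]` plus the untreated trend, while that of the non-neighbouring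
controls is the untreated trend alone. (A6) equates the untreated trends, so `Δμ_N(X) - Δμ_C(X)`
is the spillover, which by (A5) is `E[Y₁^{(1,1)} - Y₁^{(1,0)} ∣ G=T, X]`. Throughout, a version
is recovered from `E[Z·1{G=g} ∣ 𝔛]` by dividing by `e_g(X)`, and integrating it against `e_T(X)`
undoes the conditioning on `G = T`.
-/

theorem mul_indG_eq_indicator {Ω : Type} (G : Ω → GLabel) (g : GLabel) (Z : Ω → ℝ) :
    (fun ω => Z ω * indG G g ω) = (G ⁻¹' {g}).indicator Z := by
  funext ω
  by_cases h : G ω = g <;> simp [indG, Set.indicator, h]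

section IsCondVersion

variable {Ω : Type} [MeasurableSpace Ω] {P : Measure Ω} {q : ℕ} {X : Ω → (Fin q → ℝ)}
  {G : Ω → GLabel} {e : GLabel → (Fin q → ℝ) → ℝ} {g : GLabel}

theorem MeasureTheory.Integrable.mul_indG {Z : Ω → ℝ} (hZ : Integrable Z P) (hG : Measurable G) :
    Integrable (fun ω => Z ω * indG G g ω) P := by
  rw [mul_indG_eq_indicator G g Z]
  exact hZ.indicator (hG MeasurableSpace.measurableSet_top)

theorem IsCondVersion.add {Z₁ Z₂ : Ω → ℝ} {f₁ f₂ : (Fin q → ℝ) → ℝ}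
    (hf₁ : IsCondVersion P X G e g Z₁ f₁) (hf₂ : IsCondVersion P X G e g Z₂ f₂)
    (hZ₁ : Integrable Z₁ P) (hZ₂ : Integrable Z₂ P) (hG : Measurable G) :
    IsCondVersion P X G e g (fun ω => Z₁ ω + Z₂ ω) (fun x => f₁ x + f₂ x) := by
  refine ⟨hf₁.1.add hf₂.1, ?_⟩
  have hsum : (fun ω => (Z₁ ω + Z₂ ω) * indG G g ω)
      = (fun ω => Z₁ ω * indG G g ω) + (fun ω => Z₂ ω * indG G g ω) :=
    funext fun ω => add_mul _ _ _
  rw [hsum]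
  filter_upwards [condExp_add (hZ₁.mul_indG hG) (hZ₂.mul_indG hG) (sigmaX X), hf₁.2, hf₂.2]
    with ω h h₁ h₂
  rw [h, Pi.add_apply, h₁, h₂, add_mul]

theorem IsCondVersion.ae_eq_of_ae_eq_on_label {Z Z' : Ω → ℝ} {f f' : (Fin q → ℝ) → ℝ}
    (hf : IsCondVersion P X G e g Z f) (hf' : IsCondVersion P X G e g Z' f')
    (hZ : ∀ᵐ ω ∂P, G ω = g → Z ω = Z' ω) (he : ∀ x, e g x ≠ 0) :
    (fun ω => f (X ω)) =ᵐ[P] (fun ω => f' (X ω)) := by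
  have hZind : (fun ω => Z ω * indG G g ω) =ᵐ[P] (fun ω => Z' ω * indG G g ω) := by
    filter_upwards [hZ] with ω hω
    by_cases h : G ω = g
    · rw [hω h]
    · simp [indG, h]
  filter_upwards [hf.2.symm.trans ((condExp_congr_ae hZind).trans hf'.2)] with ω hω
  exact mul_right_cancel₀ (he (X ω)) hω

theorem IsCondVersion.integral_mul_indG [IsFiniteMeasure P] {Z : Ω → ℝ}
    {f : (Fin q → ℝ) → ℝ} (hf : IsCondVersion P X G e g Z f) (hX : Measurable X) :
    ∫ ω, Z ω * indG G g ω ∂P = ∫ ω, f (X ω) * e g (X ω) ∂P := by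
  rw [← integral_condExp hX.comap_le]
  exact integral_congr_ae hf.2

end IsCondVersion

theorem stmt_6_general
    {Ω : Type} [MeasurableSpace Ω] (P : Measure Ω) [IsProbabilityMeasure P]
    {q : ℕ} (X : Ω → (Fin q → ℝ)) (hX : Measurable X)
    (G : Ω → GLabel) (hG : Measurable G)
    (Y0 Y1 : Ω → ℝ)
    (e : GLabel → (Fin q → ℝ) → ℝ)
    (ε : ℝ) (hε : 0 < ε) (hpos : ∀ g x, ε ≤ e g x)
    (Y110 Y111 Y101 Y100 Y000 : Ω → ℝ)
    (hI01 : Integrable Y101 P) (hI00 : Integrable Y100 P) (hI000 : Integrable Y000 P)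
    (hconsN : ∀ᵐ ω ∂P, G ω = GLabel.N → Y1 ω = Y101 ω)
    (hconsC : ∀ᵐ ω ∂P, G ω = GLabel.C → Y1 ω = Y100 ω)
    (hcons0 : Y0 =ᵐ[P] Y000)
    (fT fN : (Fin q → ℝ) → ℝ)
    (hfT : IsCondVersion P X G e GLabel.T (fun ω => Y110 ω - Y111 ω) fT)
    (hfN : IsCondVersion P X G e GLabel.N (fun ω => Y101 ω - Y100 ω) fN)
    (hA5 : ∀ᵐ ω ∂P, fT (X ω) + fN (X ω) = 0)
    (gN gC : (Fin q → ℝ) → ℝ)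
    (hgN : IsCondVersion P X G e GLabel.N (fun ω => Y100 ω - Y000 ω) gN)
    (hgC : IsCondVersion P X G e GLabel.C (fun ω => Y100 ω - Y000 ω) gC)
    (hA6 : ∀ᵐ ω ∂P, gN (X ω) = gC (X ω))
    (ΔμN ΔμC : (Fin q → ℝ) → ℝ)
    (hΔμN : IsCondVersion P X G e GLabel.N (fun ω => Y1 ω - Y0 ω) ΔμN)
    (hΔμC : IsCondVersion P X G e GLabel.C (fun ω => Y1 ω - Y0 ω) ΔμC)
    :
    (∫ ω, (Y111 ω - Y110 ω) * indG G GLabel.T ω ∂P) / (P {ω | G ω = GLabel.T}).toReal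
      = ∫ ω, (e GLabel.T (X ω) / (P {ω | G ω = GLabel.T}).toReal) * (ΔμN (X ω) - ΔμC (X ω)) ∂P := by
  have he0 : ∀ g x, e g x ≠ 0 := fun g x => (hε.trans_le (hpos g x)).ne'
  have hN : (fun ω => ΔμN (X ω)) =ᵐ[P] (fun ω => fN (X ω) + gN (X ω)) := by
    refine hΔμN.ae_eq_of_ae_eq_on_label
      (hfN.add hgN (hI01.sub hI00) (hI00.sub hI000) hG) ?_ (he0 _)
    filter_upwards [hconsN, hcons0] with ω h₁ h₀ hω
    rw [h₁ hω, h₀]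
    ring
  have hC : (fun ω => ΔμC (X ω)) =ᵐ[P] (fun ω => gC (X ω)) := by
    refine hΔμC.ae_eq_of_ae_eq_on_label hgC ?_ (he0 _)
    filter_upwards [hconsC, hcons0] with ω h₁ h₀ hω
    rw [h₁ hω, h₀]
  have hcontrast : (fun ω => ΔμN (X ω) - ΔμC (X ω)) =ᵐ[P] (fun ω => -fT (X ω)) := by
    filter_upwards [hN, hC, hA5, hA6] with ω hN hC h₅ h₆
    rw [hN, hC, h₆]
    linarith
  set pT := (P {ω | G ω = GLabel.T}).toReal
  calc (∫ ω, (Y111 ω - Y110 ω) * indG G GLabel.T ω ∂P) / pT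
      = -(∫ ω, (Y110 ω - Y111 ω) * indG G GLabel.T ω ∂P) / pT := by
        rw [← integral_neg]
        congr 2 with ω
        ring
    _ = -(∫ ω, fT (X ω) * e GLabel.T (X ω) ∂P) / pT := by
        rw [hfT.integral_mul_indG hX]
    _ = ∫ ω, (e GLabel.T (X ω) / pT) * (ΔμN (X ω) - ΔμC (X ω)) ∂P := by
        rw [← integral_neg, ← integral_div]
        refine integral_congr_ae ?_
        filter_upwards [hcontrast] with ω hω
        rw [hω]
        ring

theorem stmt_6
    {Ω : Type} [MeasurableSpace Ω] (P : Measure Ω) [IsProbabilityMeasure P]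
    {q : ℕ} (X : Ω → (Fin q → ℝ)) (hX : Measurable X)
    (G : Ω → GLabel) (hG : Measurable G)
    (Y0 Y1 : Ω → ℝ) (hY0 : Integrable Y0 P) (hY1 : Integrable Y1 P)
    (e : GLabel → (Fin q → ℝ) → ℝ) (he : ∀ g, Measurable (e g))
    (he1 : ∀ g x, e g x ≤ 1)
    (hprop : ∀ g : GLabel,
      P[(fun ω => indG G g ω) | sigmaX X] =ᵐ[P] (fun ω => e g (X ω)))
    (ε : ℝ) (hε : 0 < ε) (hpos : ∀ g x, ε ≤ e g x)
    (hpT : 0 < (P {ω | G ω = GLabel.T}).toReal)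
    (Y110 Y111 Y101 Y100 Y000 : Ω → ℝ)
    (hI10 : Integrable Y110 P) (hI11 : Integrable Y111 P)
    (hI01 : Integrable Y101 P) (hI00 : Integrable Y100 P) (hI000 : Integrable Y000 P)
    (hconsT : ∀ᵐ ω ∂P, G ω = GLabel.T → Y1 ω = Y110 ω)
    (hconsN : ∀ᵐ ω ∂P, G ω = GLabel.N → Y1 ω = Y101 ω)
    (hconsC : ∀ᵐ ω ∂P, G ω = GLabel.C → Y1 ω = Y100 ω)
    (hcons0 : Y0 =ᵐ[P] Y000)
    (fT fN : (Fin q → ℝ) → ℝ)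
    (hfT : IsCondVersion P X G e GLabel.T (fun ω => Y110 ω - Y111 ω) fT)
    (hfN : IsCondVersion P X G e GLabel.N (fun ω => Y101 ω - Y100 ω) fN)
    (hA5 : ∀ᵐ ω ∂P, fT (X ω) + fN (X ω) = 0)
    (gN gC : (Fin q → ℝ) → ℝ)
    (hgN : IsCondVersion P X G e GLabel.N (fun ω => Y100 ω - Y000 ω) gN)
    (hgC : IsCondVersion P X G e GLabel.C (fun ω => Y100 ω - Y000 ω) gC)
    (hA6 : ∀ᵐ ω ∂P, gN (X ω) = gC (X ω))
    (ΔμN ΔμC : (Fin q → ℝ) → ℝ)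
    (hΔμN : IsCondVersion P X G e GLabel.N (fun ω => Y1 ω - Y0 ω) ΔμN)
    (hΔμC : IsCondVersion P X G e GLabel.C (fun ω => Y1 ω - Y0 ω) ΔμC)
    :
    (∫ ω, (Y111 ω - Y110 ω) * indG G GLabel.T ω ∂P) / (P {ω | G ω = GLabel.T}).toReal
      = ∫ ω, (e GLabel.T (X ω) / (P {ω | G ω = GLabel.T}).toReal) * (ΔμN (X ω) - ΔμC (X ω)) ∂P :=
  stmt_6_general P X hX G hG Y0 Y1 e ε hε hpos Y110 Y111 Y101 Y100 Y000 hI01 hI00 hI000 hconsN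
    hconsC hcons0 fT fN hfT hfN hA5 gN gC hgN hgC hA6 ΔμN ΔμC hΔμN hΔμC
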